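/- arXiv:1011.0819 — 5 statements merged into one kernel-verified Lean document; each statement's English description precedes it below -/
import Mathlib

section
/- Let μ be a probability measure on U and S : U → Set U a set-valued map with u ∈ S(u) for all u. Define Q(u) = μ{v : u ∉ S(v)}. If (μ, S) is credible at level α, i.e., μ{u* : Q(u*) ≥ 1 - α} ≤ α, and for each data value x the weakened posterior focal elements M_x(u; S) = ⋃{M_x(v) : v ∈ S(u)} are almost surely nonempty, then for any assertion A ⊆ 𝕋 and any true parameter θ ∉ A, the probability under the sampling distribution P_θ that the posterior belief Bel_X(A; S) = μ{u : M_X(u; S) ⊆ A} exceeds 1 - α is at most α. -/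
open MeasureTheory

/-- Theorem 1, Zhang--Liu: credibility of the belief `(μ, S)` implies
the frequency property of the weakened posterior belief function. -/
theorem credible_implies_frequency_property
    {𝕏 𝕋 𝕌 : Type*} [MeasurableSpace 𝕌]
    (μ : Measure 𝕌) [IsProbabilityMeasure μ]
    (a : 𝕋 → 𝕌 → 𝕏)
    (S : 𝕌 → Set 𝕌) (hS : ∀ u, u ∈ S u)
    (α : ℝ) (hα : α ∈ Set.Ioo (0:ℝ) 1)
    (Q : 𝕌 → ℝ) (hQ : ∀ u, Q u = (μ {v | u ∉ S v}).toReal)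
    (hcred : (μ {ustar | 1 - α ≤ Q ustar}).toReal ≤ α)
    (M : 𝕏 → 𝕌 → Set 𝕋) (hM : ∀ x u, M x u = {ϑ | x = a ϑ u})
    (MS : 𝕏 → 𝕌 → Set 𝕋) (hMS : ∀ x u, MS x u = ⋃ v ∈ S u, M x v)
    (hne : ∀ x : 𝕏, μ {u | MS x u ≠ ∅} = 1)
    (Bel : 𝕏 → Set 𝕋 → ℝ) (hBel : ∀ x A, Bel x A = (μ {u | MS x u ⊆ A}).toReal)
    (θ : 𝕋) (A : Set 𝕋) (hθA : θ ∉ A) :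
    (μ {ustar | 1 - α ≤ Bel (a θ ustar) A}).toReal ≤ α := by
  have key : {ustar | 1 - α ≤ Bel (a θ ustar) A} ⊆ {ustar | 1 - α ≤ Q ustar} := by
    intro ustar h
    have hsub : {u | MS (a θ ustar) u ⊆ A} ⊆ {v | ustar ∉ S v} := by
      intro u hu hmem
      have hθ : θ ∈ MS (a θ ustar) u := by
        rw [hMS]
        exact Set.mem_biUnion hmem (by rw [hM]; exact rfl)
      exact hθA (hu hθ)
    have hle : Bel (a θ ustar) A ≤ Q ustar := by
      rw [hBel, hQ]
      exact ENNReal.toReal_mono (measure_ne_top μ _) (measure_mono hsub)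
    exact le_trans h hle
  refine le_trans ?_ hcred
  exact ENNReal.toReal_mono (measure_ne_top μ _) (measure_mono key)
end

section
/- In the weak belief framework, for a fixed true parameter θ and belief (μ, S) with u ∈ S(u), the key inequality Bel_X(A; S) ≤ Q(U*) holds pointwise: if θ ∉ A, then the weakened posterior belief satisfies Bel_X(A; S) ≤ μ{u : S(u) ∌ U*} where U* is the realized auxiliary variable generating X = a(θ, U*). -/
open MeasureTheory

/-- the key pointwise inequality `Bel_X(A; S) ≤ Q(U*)` when `θ ∉ A`. -/
theorem weakened_belief_le_noncoverage
    {𝕏 𝕋 𝕌 : Type*} [MeasurableSpace 𝕌]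
    (μ : Measure 𝕌) [IsProbabilityMeasure μ]
    (a : 𝕋 → 𝕌 → 𝕏)
    (S : 𝕌 → Set 𝕌) (hS : ∀ u, u ∈ S u)
    (M : 𝕏 → 𝕌 → Set 𝕋) (hM : ∀ x u, M x u = {ϑ | x = a ϑ u})
    (MS : 𝕏 → 𝕌 → Set 𝕋) (hMS : ∀ x u, MS x u = ⋃ v ∈ S u, M x v)
    (θ : 𝕋) (A : Set 𝕋) (hθA : θ ∉ A)
    (ustar : 𝕌) :
    μ {u | MS (a θ ustar) u ⊆ A} ≤ μ {u | ustar ∉ S u} := by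
  apply measure_mono
  intro u hu hmem
  exact hθA (hu (by
    rw [hMS]
    exact Set.mem_biUnion hmem (by rw [hM]; exact rfl)))
end

section
/- In the normal mean example with a-equation X = θ + Φ⁻¹(U), U ~ Uniform(0,1), and predictive random set S_ω(U) = [U - ωU, U + ω(1-U)] for ω ∈ [0,1], the weakened posterior belief and plausibility for the assertion A_θ = {Θ ≤ θ} are Bel_X(A_θ; S_ω) = max(0, 1 - Φ(X-θ)/(1-ω)) and Pl_X(A_θ; S_ω) = 1 - max(0, (Φ(X-θ) - ω)/(1-ω)), where Φ is the standard normal CDF. -/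
open MeasureTheory

/-!
For `u ∈ (0,1)` the focal element is a nonempty interval whose right end point is
`X - Φ⁻¹((1-ω)u)` and whose left end point is `X - Φ⁻¹(u + ω(1-u))`. Since `Φ` is strictly
increasing, the interval lies in `(-∞, θ]` iff `Φ(X-θ) ≤ (1-ω)u`, and in `(θ, ∞)` iff
`u + ω(1-u) < Φ(X-θ)`. So the two events are the intervals `[Φ(X-θ)/(1-ω), 1)` and
`(0, (Φ(X-θ)-ω)/(1-ω))` of `u`, whose Lebesgue measures are the claimed formulas.
-/

namespace NormalMean

def focalElement (Φinv : ℝ → ℝ) (X ω u : ℝ) : Set ℝ :=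
  Set.Icc (X - Φinv (u + ω * (1 - u))) (X - Φinv (u - ω * u))

variable {ω u : ℝ}

lemma sub_mul_self_mem_Ioo (hω : ω ∈ Set.Ico 0 1) (hu : u ∈ Set.Ioo 0 1) :
    u - ω * u ∈ Set.Ioo (0 : ℝ) 1 := by
  obtain ⟨hω0, hω1⟩ := hω
  obtain ⟨hu0, hu1⟩ := hu
  constructor <;> nlinarith

lemma add_mul_one_sub_mem_Ioo (hω : ω ∈ Set.Ico 0 1) (hu : u ∈ Set.Ioo 0 1) :
    u + ω * (1 - u) ∈ Set.Ioo (0 : ℝ) 1 := by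
  obtain ⟨hω0, hω1⟩ := hω
  obtain ⟨hu0, hu1⟩ := hu
  constructor <;> nlinarith

variable {Φ Φinv : ℝ → ℝ} {X θ : ℝ}

lemma sub_le_iff_of_rightInverse (hΦ : StrictMono Φ) {v : ℝ} (hv : Φ (Φinv v) = v) :
    X - Φinv v ≤ θ ↔ Φ (X - θ) ≤ v := by
  rw [sub_le_comm, ← hΦ.le_iff_le, hv]

lemma lt_sub_iff_of_rightInverse (hΦ : StrictMono Φ) {v : ℝ} (hv : Φ (Φinv v) = v) :
    θ < X - Φinv v ↔ v < Φ (X - θ) := by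
  rw [lt_sub_comm, ← hΦ.lt_iff_lt, hv]

variable (hΦ : StrictMono Φ) (hinv : ∀ v ∈ Set.Ioo (0 : ℝ) 1, Φ (Φinv v) = v)
  (hω : ω ∈ Set.Ico 0 1)
include hΦ hinv hω

lemma focalElement_left_le_right (hu : u ∈ Set.Ioo 0 1) :
    X - Φinv (u + ω * (1 - u)) ≤ X - Φinv (u - ω * u) := by
  have hlo := hinv _ (sub_mul_self_mem_Ioo hω hu)
  have hhi := hinv _ (add_mul_one_sub_mem_Ioo hω hu)
  have : Φinv (u - ω * u) ≤ Φinv (u + ω * (1 - u)) := by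
    rw [← hΦ.le_iff_le, hlo, hhi]
    nlinarith [hω.1, hu.2]
  linarith

lemma focalElement_subset_Iic_iff (hu : u ∈ Set.Ioo 0 1) :
    focalElement Φinv X ω u ⊆ Set.Iic θ ↔ Φ (X - θ) ≤ u - ω * u := by
  rw [focalElement, Set.Icc_subset_Iic_iff (focalElement_left_le_right hΦ hinv hω hu),
    sub_le_iff_of_rightInverse hΦ (hinv _ (sub_mul_self_mem_Ioo hω hu))]

lemma focalElement_subset_Ioi_iff (hu : u ∈ Set.Ioo 0 1) :
    focalElement Φinv X ω u ⊆ Set.Ioi θ ↔ u + ω * (1 - u) < Φ (X - θ) := by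
  rw [focalElement, Set.Icc_subset_Ioi_iff (focalElement_left_le_right hΦ hinv hω hu),
    lt_sub_iff_of_rightInverse hΦ (hinv _ (add_mul_one_sub_mem_Ioo hω hu))]

lemma setOf_focalElement_subset_Iic (hp : 0 < Φ (X - θ)) :
    {u | focalElement Φinv X ω u ⊆ Set.Iic θ} ∩ Set.Ioo 0 1 =
      Set.Ico (Φ (X - θ) / (1 - ω)) 1 := by
  have h1ω : 0 < 1 - ω := sub_pos.2 hω.2
  ext u
  simp only [Set.mem_inter_iff, Set.mem_ofPred_eq, Set.mem_Ico, div_le_iff₀ h1ω]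
  constructor
  · rintro ⟨hsub, hu⟩
    rw [focalElement_subset_Iic_iff hΦ hinv hω hu] at hsub
    exact ⟨by linarith, hu.2⟩
  · rintro ⟨hpu, hu1⟩
    have hu : u ∈ Set.Ioo 0 1 := ⟨by nlinarith, hu1⟩
    rw [focalElement_subset_Iic_iff hΦ hinv hω hu]
    exact ⟨by linarith, hu⟩

lemma setOf_focalElement_subset_Ioi (hp : Φ (X - θ) < 1) :
    {u | focalElement Φinv X ω u ⊆ Set.Ioi θ} ∩ Set.Ioo 0 1 =
      Set.Ioo 0 ((Φ (X - θ) - ω) / (1 - ω)) := by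
  have h1ω : 0 < 1 - ω := sub_pos.2 hω.2
  ext u
  simp only [Set.mem_inter_iff, Set.mem_ofPred_eq, Set.mem_Ioo, lt_div_iff₀ h1ω]
  constructor
  · rintro ⟨hsub, hu⟩
    rw [focalElement_subset_Ioi_iff hΦ hinv hω hu] at hsub
    exact ⟨hu.1, by linarith⟩
  · rintro ⟨hu0, hup⟩
    have hu : u ∈ Set.Ioo 0 1 := ⟨hu0, by nlinarith⟩
    rw [focalElement_subset_Ioi_iff hΦ hinv hω hu]
    exact ⟨by linarith, hu⟩

end NormalMean

open NormalMean in
theorem normal_mean_belief_plausibility_general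
    (Φ Φinv : ℝ → ℝ)
    (hΦmono : StrictMono Φ)
    (hΦrange : ∀ x : ℝ, Φ x ∈ Set.Ioo (0:ℝ) 1)
    (hinv₁ : ∀ u ∈ Set.Ioo (0:ℝ) 1, Φ (Φinv u) = u)
    (X θ ω : ℝ) (hω : ω ∈ Set.Ioo (0:ℝ) 1)
    (μ : Measure ℝ) (hμ : μ = volume.restrict (Set.Ioo (0:ℝ) 1))
    (M : ℝ → Set ℝ)
    (hMdef : ∀ u, M u = Set.Icc (X - Φinv (u + ω * (1 - u))) (X - Φinv (u - ω * u)))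
    (Bel : Set ℝ → ℝ) (hBel : ∀ A, Bel A = (μ {u | M u ⊆ A}).toReal) :
    Bel (Set.Iic θ) = max 0 (1 - Φ (X - θ) / (1 - ω)) ∧
    1 - Bel (Set.Iic θ)ᶜ = 1 - max 0 ((Φ (X - θ) - ω) / (1 - ω)) := by
  have hω' : ω ∈ Set.Ico 0 1 := Set.Ioo_subset_Ico_self hω
  have hM : M = focalElement Φinv X ω := funext hMdef
  have hBel' : ∀ A, Bel A = (volume ({u | focalElement Φinv X ω u ⊆ A} ∩ Set.Ioo 0 1)).toReal :=
    fun A ↦ by rw [hBel, hμ, hM, Measure.restrict_apply' measurableSet_Ioo]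
  constructor
  · rw [hBel', setOf_focalElement_subset_Iic hΦmono hinv₁ hω' (hΦrange _).1, Real.volume_Ico,
      ENNReal.toReal_ofReal', max_comm]
  · rw [Set.compl_Iic, hBel', setOf_focalElement_subset_Ioi hΦmono hinv₁ hω' (hΦrange _).2,
      Real.volume_Ioo, ENNReal.toReal_ofReal', max_comm, sub_zero]

/-- belief and plausibility formulas in the normal mean example with
predictive random set `S_ω(U) = [U - ωU, U + ω(1-U)]`. -/
theorem normal_mean_belief_plausibility
    (Φ Φinv : ℝ → ℝ)
    (hΦmono : StrictMono Φ)
    (hΦrange : ∀ x : ℝ, Φ x ∈ Set.Ioo (0:ℝ) 1)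
    (hinv₁ : ∀ u ∈ Set.Ioo (0:ℝ) 1, Φ (Φinv u) = u)
    (hinv₂ : ∀ x : ℝ, Φinv (Φ x) = x)
    (X θ ω : ℝ) (hω : ω ∈ Set.Ioo (0:ℝ) 1)
    (μ : Measure ℝ) (hμ : μ = volume.restrict (Set.Ioo (0:ℝ) 1))
    (M : ℝ → Set ℝ)
    (hMdef : ∀ u, M u = Set.Icc (X - Φinv (u + ω * (1 - u))) (X - Φinv (u - ω * u)))
    (Bel : Set ℝ → ℝ) (hBel : ∀ A, Bel A = (μ {u | M u ⊆ A}).toReal) :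
    Bel (Set.Iic θ) = max 0 (1 - Φ (X - θ) / (1 - ω)) ∧
    1 - Bel (Set.Iic θ)ᶜ = 1 - max 0 ((Φ (X - θ) - ω) / (1 - ω)) :=
  normal_mean_belief_plausibility_general Φ Φinv hΦmono hΦrange hinv₁ X θ ω hω μ hμ M hMdef Bel hBel
end

section
/- In the normal mean example, the predictive random set S_ω(U) = [U - ωU, U + ω(1-U)] with U ~ Uniform(0,1) is credible at every level α ∈ (0,1) whenever ω ∈ [1/2, 1]: that is, with Q_ω(u) = P{U : u ∉ S_ω(U)}, one has P{U* ~ Unif(0,1) : Q_ω(U*) ≥ 1 - α} ≤ α. -/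
open MeasureTheory Set

/-!
A draw `v` fails to cover `u` exactly when `u < (1-ω) v` or `1 - u < (1-ω)(1 - v)`. Under the
uniform law these events have probability at most `1 - u/(1-ω)` and `1 - (1-u)/(1-ω)`, and since
`1 - ω ≤ 1/2` at least one of the two bounds is nonpositive. Hence `Q_ω(u) ≥ 1 - α` forces `u` to lie
within `α(1-ω)` of an endpoint of `[0,1]`, a set of probability `2α(1-ω) ≤ α`.
-/

lemma notMem_Icc_sub_mul_add_mul_iff (ω u v : ℝ) :
    u ∉ Icc (v - ω * v) (v + ω * (1 - v)) ↔ u < (1 - ω) * v ∨ 1 - u < (1 - ω) * (1 - v) := by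
  simp only [mem_Icc, not_and_or, not_le]
  exact or_congr ⟨fun h => by linarith, fun h => by linarith⟩
    ⟨fun h => by linarith, fun h => by linarith⟩

lemma restrict_Ioo_zero_one_lt_mul_le {t : ℝ} (ht : 0 < t) (c : ℝ) :
    volume.restrict (Ioo (0 : ℝ) 1) {v | c < t * v} ≤ ENNReal.ofReal (1 - c / t) := by
  rw [Measure.restrict_apply' measurableSet_Ioo]
  calc volume ({v | c < t * v} ∩ Ioo 0 1)
      ≤ volume (Ioo (c / t) 1) :=
        measure_mono fun v ⟨hv, _, hv1⟩ => ⟨(div_lt_iff₀' ht).mpr hv, hv1⟩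
    _ = ENNReal.ofReal (1 - c / t) := Real.volume_Ioo

lemma restrict_Ioo_zero_one_lt_mul_one_sub_le {t : ℝ} (ht : 0 < t) (c : ℝ) :
    volume.restrict (Ioo (0 : ℝ) 1) {v | c < t * (1 - v)} ≤ ENNReal.ofReal (1 - c / t) := by
  rw [Measure.restrict_apply' measurableSet_Ioo]
  calc volume ({v | c < t * (1 - v)} ∩ Ioo 0 1)
      ≤ volume (Ioo 0 (1 - c / t)) :=
        measure_mono fun v ⟨hv, hv0, _⟩ => ⟨hv0, by have := (div_lt_iff₀' ht).mpr hv; linarith⟩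
    _ = ENNReal.ofReal (1 - c / t) := by rw [Real.volume_Ioo, sub_zero]

lemma le_mul_of_ofReal_one_sub_le {α t c : ℝ} (hα : α < 1) (ht : 0 < t)
    (h : ENNReal.ofReal (1 - α) ≤ ENNReal.ofReal (1 - c / t)) : c ≤ α * t := by
  have : 1 - α ≤ 1 - c / t := (ENNReal.ofReal_le_ofReal_iff'.mp h).resolve_right (by linarith)
  rwa [sub_le_sub_iff_left, div_le_iff₀ ht] at this

lemma restrict_Ioo_zero_one_tails_le {a : ℝ} (ha : 0 ≤ a) :
    volume.restrict (Ioo (0 : ℝ) 1) (Iic a ∪ Ici (1 - a)) ≤ ENNReal.ofReal (2 * a) := by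
  have hIic : volume.restrict (Ioo (0 : ℝ) 1) (Iic a) ≤ volume (Ioc 0 a) := by
    rw [Measure.restrict_apply' measurableSet_Ioo]
    exact measure_mono fun x ⟨hxa, hx0, _⟩ => ⟨hx0, hxa⟩
  have hIci : volume.restrict (Ioo (0 : ℝ) 1) (Ici (1 - a)) ≤ volume (Ico (1 - a) 1) := by
    rw [Measure.restrict_apply' measurableSet_Ioo]
    exact measure_mono fun x ⟨hxa, _, hx1⟩ => ⟨hxa, hx1⟩
  calc volume.restrict (Ioo (0 : ℝ) 1) (Iic a ∪ Ici (1 - a))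
      ≤ volume (Ioc 0 a) + volume (Ico (1 - a) 1) :=
        (measure_union_le _ _).trans (add_le_add hIic hIci)
    _ = ENNReal.ofReal (2 * a) := by
        rw [Real.volume_Ioc, Real.volume_Ico, ← ENNReal.ofReal_add (by linarith) (by linarith)]
        ring_nf

lemma mem_tails_of_one_sub_le_noncoverage {ω α u : ℝ} (hω : ω ∈ Icc (1 / 2 : ℝ) 1) (hα : α < 1)
    (h : ENNReal.ofReal (1 - α) ≤
      volume.restrict (Ioo (0 : ℝ) 1) {v | u ∉ Icc (v - ω * v) (v + ω * (1 - v))}) :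
    u ∈ Iic (α * (1 - ω)) ∪ Ici (1 - α * (1 - ω)) := by
  simp only [notMem_Icc_sub_mul_add_mul_iff, ofPred_or] at h
  obtain ⟨hω₁, hω₂⟩ := hω
  rcases (sub_nonneg.mpr hω₂).eq_or_lt with ht | ht
  · -- `ω = 1`: every `S_1(v)` is `[0, 1]`
    rw [← ht] at h ⊢
    simp only [zero_mul, mul_zero, sub_zero, mem_union, mem_Iic, mem_Ici] at h ⊢
    by_contra! hu
    simp only [not_lt.mpr hu.1.le, not_lt.mpr (sub_nonneg.mpr hu.2.le), ofPred_false,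
      union_empty, measure_empty, nonpos_iff_eq_zero, ENNReal.ofReal_eq_zero] at h
    linarith
  have hA := restrict_Ioo_zero_one_lt_mul_le ht u
  have hB := restrict_Ioo_zero_one_lt_mul_one_sub_le ht (1 - u)
  replace h := h.trans (measure_union_le _ _)
  -- as `1 - ω ≤ 1/2`, one of the two bounds `hA`, `hB` vanishes
  rcases le_or_gt (1 - ω) u with hu | hu
  · rw [ENNReal.ofReal_of_nonpos (by rwa [sub_nonpos, one_le_div₀ ht])] at hA
    have := le_mul_of_ofReal_one_sub_le hα ht (h.trans (add_le_add hA hB) |>.trans_eq (zero_add _))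
    exact Or.inr (show 1 - α * (1 - ω) ≤ u by linarith)
  · rw [ENNReal.ofReal_of_nonpos (by rw [sub_nonpos, one_le_div₀ ht]; linarith)] at hB
    exact Or.inl (le_mul_of_ofReal_one_sub_le hα ht
      (h.trans (add_le_add hA hB) |>.trans_eq (add_zero _)))

/-- in the normal mean example, the predictive random set
`S_ω(U) = [U - ωU, U + ω(1-U)]` with `U ~ Unif(0,1)` is credible at every level
`α ∈ (0,1)` whenever `ω ∈ [1/2, 1]`. -/
theorem normal_mean_PRS_credible
    (ω : ℝ) (hω : ω ∈ Set.Icc (1/2 : ℝ) 1)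
    (α : ℝ) (hα : α ∈ Set.Ioo (0:ℝ) 1)
    (μ : Measure ℝ) (hμ : μ = volume.restrict (Set.Ioo (0:ℝ) 1))
    (Q : ℝ → ℝ)
    (hQ : ∀ u, Q u = (μ {v | u ∉ Set.Icc (v - ω * v) (v + ω * (1 - v))}).toReal) :
    (μ {ustar | 1 - α ≤ Q ustar}).toReal ≤ α := by
  subst hμ
  have hsub : {ustar | 1 - α ≤ Q ustar} ⊆ Iic (α * (1 - ω)) ∪ Ici (1 - α * (1 - ω)) := by
    intro u hu
    refine mem_tails_of_one_sub_le_noncoverage hω hα.2 ?_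
    rw [← ENNReal.ofReal_toReal (measure_ne_top _ _), ← hQ u]
    exact ENNReal.ofReal_le_ofReal hu
  refine ENNReal.toReal_le_of_le_ofReal hα.1.le ?_
  calc volume.restrict (Ioo (0 : ℝ) 1) {ustar | 1 - α ≤ Q ustar}
      ≤ ENNReal.ofReal (2 * (α * (1 - ω))) :=
        (measure_mono hsub).trans (restrict_Ioo_zero_one_tails_le (by nlinarith [hα.1, hω.2]))
    _ ≤ ENNReal.ofReal α := ENNReal.ofReal_le_ofReal (by nlinarith [hα.1, hω.1])
end

section
/- In the Bernoulli example with hierarchical interval weakening S_ω(U) = ∏_{i=1}^n [U_i - ωU_i, U_i + ω(1-U_i)], the weakened posterior focal element given success count N is the interval M_N(U; S_ω) = [U_(N) - ωU_(N), U_(N+1) + ω(1 - U_(N+1))], i.e., the union over u ∈ S_ω(U) of the intervals [u_(N), u_(N+1)] equals this enlarged interval. -/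
/-- The `k`-th order statistic of `u : Fin n → ℝ` for `k = 1,…,n`, with the conventions
`u_(0) = 0` and `u_(k) = 1` for `k > n`. -/
noncomputable def ostat (n : ℕ) (u : Fin n → ℝ) (k : ℕ) : ℝ :=
  if k = 0 then 0
  else if n < k then 1
  else ((List.ofFn u).insertionSort (· ≤ ·)).getD (k - 1) 0

/-!
Sorting is monotone in the pointwise order and commutes with monotone maps, so on the box
`lo ∘ U ≤ u ≤ hi ∘ U` (here `lo v = v - ωv`, `hi v = v + ω(1 - v)`) one has
`lo U_(N) ≤ u_(N)` and `u_(N+1) ≤ hi U_(N+1)`. Both bounds are attained by one `u`: move the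
entries `≤ U_(N)` down to `lo` and the others up to `hi`. That map is monotone, hence preserves
ranks, and since `U` is injective, `U_(N) < U_(N+1)` puts `U_(N+1)` on the `hi` side.
-/

open Finset Function Set

namespace Tuple

variable {n : ℕ} {α β : Type*} [LinearOrder α]

/-- At least `j + 1` entries of `u` lie below the `j`-th smallest entry of `v`. -/
theorem comp_sort_le_comp_sort {u v : Fin n → α} (h : u ≤ v) : u ∘ sort u ≤ v ∘ sort v := by
  classical
  intro j
  set a := (v ∘ sort v) j
  rw [← lt_card_le_iff_apply_le_of_monotone (monotone_sort u)]
  calc (j : ℕ) < #{i | (v ∘ sort v) i ≤ a} :=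
        (lt_card_le_iff_apply_le_of_monotone (monotone_sort v)).mpr le_rfl
    _ = #{i | v i ≤ a} := card_equiv (sort v) (by simp)
    _ ≤ #{i | u i ≤ a} := card_le_card (monotone_filter_right _ fun i _ => (h i).trans)
    _ = #{i | (u ∘ sort u) i ≤ a} := (card_equiv (sort u) (by simp)).symm

theorem comp_sort_comp_of_monotone [LinearOrder β] {φ : α → β} (hφ : Monotone φ)
    (u : Fin n → α) : (φ ∘ u) ∘ sort (φ ∘ u) = φ ∘ (u ∘ sort u) :=
  (comp_sort_eq_comp_iff_monotone.mpr (hφ.comp (monotone_sort u))).symm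

theorem strictMono_comp_sort {u : Fin n → α} (hu : Injective u) : StrictMono (u ∘ sort u) :=
  (monotone_sort u).strictMono_of_injective (hu.comp (sort u).injective)

end Tuple

namespace List

theorem insertionSort_ofFn {n : ℕ} {α : Type*} [LinearOrder α] (u : Fin n → α) :
    (ofFn u).insertionSort (· ≤ ·) = ofFn (u ∘ Tuple.sort u) :=
  (perm_insertionSort _ _).trans ((Tuple.sort u).ofFn_comp_perm u).symm |>.eq_of_pairwise'
    (pairwise_insertionSort _ _)
    (pairwise_ofFn.mpr fun _ _ hij => Tuple.monotone_sort u hij.le)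

end List

section OrderStatistics

variable {n k : ℕ} {u v : Fin n → ℝ}

@[simp]
theorem ostat_zero (u : Fin n → ℝ) : ostat n u 0 = 0 := rfl

theorem ostat_of_lt (u : Fin n → ℝ) (hk : n < k) : ostat n u k = 1 := by
  simp [ostat, hk, (n.zero_le.trans_lt hk).ne']

theorem ostat_eq_comp_sort (u : Fin n → ℝ) (hk0 : k ≠ 0) (hkn : k ≤ n) :
    ostat n u k = (u ∘ Tuple.sort u) ⟨k - 1, by omega⟩ := by
  simp [ostat, hk0, hkn.not_gt, List.insertionSort_ofFn, show k - 1 < n by omega]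

theorem ostat_mono (h : u ≤ v) (k : ℕ) : ostat n u k ≤ ostat n v k := by
  rcases eq_or_ne k 0 with rfl | hk0
  · simp
  rcases lt_or_ge n k with hnk | hkn
  · simp [ostat_of_lt _ hnk]
  · rw [ostat_eq_comp_sort u hk0 hkn, ostat_eq_comp_sort v hk0 hkn]
    exact Tuple.comp_sort_le_comp_sort h _

theorem ostat_comp_of_monotone {φ : ℝ → ℝ} (hφ : Monotone φ) (u : Fin n → ℝ) (hk0 : k ≠ 0)
    (hkn : k ≤ n) : ostat n (φ ∘ u) k = φ (ostat n u k) := by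
  rw [ostat_eq_comp_sort _ hk0 hkn, ostat_eq_comp_sort _ hk0 hkn,
    Tuple.comp_sort_comp_of_monotone hφ]
  rfl

theorem ostat_lt_ostat_succ (hu : Injective u) (hk0 : k ≠ 0) (hkn : k + 1 ≤ n) :
    ostat n u k < ostat n u (k + 1) := by
  rw [ostat_eq_comp_sort u hk0 (by omega), ostat_eq_comp_sort u k.succ_ne_zero hkn]
  exact Tuple.strictMono_comp_sort hu (Fin.mk_lt_mk.mpr (by omega))

end OrderStatistics

theorem Monotone.piecewise_of_isLowerSet {α β : Type*} [Preorder α] [Preorder β] {f g : α → β}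
    (hf : Monotone f) (hg : Monotone g) (hfg : f ≤ g) {s : Set α} (hs : IsLowerSet s)
    [DecidablePred (· ∈ s)] : Monotone (s.piecewise f g) := by
  intro a b hab
  by_cases hb : b ∈ s
  · simp [hb, hs hab hb, hf hab]
  by_cases ha : a ∈ s
  · simpa [ha, hb] using (hfg a).trans (hg hab)
  · simpa [ha, hb] using hg hab

section Weakening

variable {n k : ℕ} {U u : Fin n → ℝ} {lo hi : ℝ → ℝ}

theorem le_ostat_of_comp_le (hlo : Monotone lo) (hlo0 : lo 0 = 0) (hu : lo ∘ U ≤ u)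
    (hkn : k ≤ n) : lo (ostat n U k) ≤ ostat n u k := by
  rcases eq_or_ne k 0 with rfl | hk0
  · simp [hlo0]
  · rw [← ostat_comp_of_monotone hlo U hk0 hkn]
    exact ostat_mono hu k

theorem ostat_le_of_le_comp (hhi : Monotone hi) (hhi1 : hi 1 = 1) (hu : u ≤ hi ∘ U)
    (hk0 : k ≠ 0) : ostat n u k ≤ hi (ostat n U k) := by
  rcases lt_or_ge n k with hnk | hkn
  · simp [ostat_of_lt _ hnk, hhi1]
  · rw [← ostat_comp_of_monotone hhi U hk0 hkn]
    exact ostat_mono hu k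

theorem exists_ostat_eq_lo_and_ostat_succ_eq_hi (hlo : Monotone lo) (hhi : Monotone hi)
    (hle : lo ≤ hi) (hlo0 : lo 0 = 0) (hhi1 : hi 1 = 1) (hU : Injective U) {N : ℕ}
    (hN : N ≤ n) : ∃ u, lo ∘ U ≤ u ∧ u ≤ hi ∘ U ∧
      ostat n u N = lo (ostat n U N) ∧ ostat n u (N + 1) = hi (ostat n U (N + 1)) := by
  classical
  set S : Set ℝ := {v | N ≠ 0 ∧ v ≤ ostat n U N}
  have hS : IsLowerSet S := fun _ _ hab hb => ⟨hb.1, hab.trans hb.2⟩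
  have hψ := hlo.piecewise_of_isLowerSet hhi hle hS
  refine ⟨S.piecewise lo hi ∘ U,
    fun i => le_piecewise (fun _ _ => le_rfl) (fun v _ => hle v) (U i),
    fun i => piecewise_le (fun v _ => hle v) (fun _ _ => le_rfl) (U i), ?_, ?_⟩
  · rcases eq_or_ne N 0 with rfl | hN0
    · simp [hlo0]
    · rw [ostat_comp_of_monotone hψ U hN0 hN]
      exact piecewise_eq_of_mem _ _ _ ⟨hN0, le_rfl⟩
  · rcases lt_or_ge n (N + 1) with hnN | hNn
    · simp [ostat_of_lt _ hnN, hhi1]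
    · rw [ostat_comp_of_monotone hψ U N.succ_ne_zero hNn]
      refine piecewise_eq_of_notMem _ _ _ fun ⟨hN0, hcN⟩ => ?_
      exact hcN.not_gt (ostat_lt_ostat_succ hU hN0 hNn)

theorem iUnion_Icc_ostat_eq (hlo : Monotone lo) (hhi : Monotone hi) (hle : lo ≤ hi)
    (hlo0 : lo 0 = 0) (hhi1 : hi 1 = 1) (hU : Injective U) {N : ℕ} (hN : N ≤ n) :
    ⋃ u ∈ {u : Fin n → ℝ | ∀ i, u i ∈ Icc (lo (U i)) (hi (U i))},
      Icc (ostat n u N) (ostat n u (N + 1)) = Icc (lo (ostat n U N)) (hi (ostat n U (N + 1))) := by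
  ext x
  simp only [mem_iUnion, exists_prop]
  constructor
  · rintro ⟨u, hu, hxu⟩
    exact ⟨(le_ostat_of_comp_le hlo hlo0 (fun i => (hu i).1) hN).trans hxu.1,
      hxu.2.trans (ostat_le_of_le_comp hhi hhi1 (fun i => (hu i).2) N.succ_ne_zero)⟩
  · intro hx
    obtain ⟨u, hlou, huhi, huN, huN'⟩ :=
      exists_ostat_eq_lo_and_ostat_succ_eq_hi hlo hhi hle hlo0 hhi1 hU hN
    exact ⟨u, fun i => ⟨hlou i, huhi i⟩, huN ▸ hx.1, huN' ▸ hx.2⟩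

end Weakening

theorem bernoulli_weakened_focal_element_general
    (n : ℕ) (U : Fin n → ℝ)
    (hinj : Function.Injective U)
    (ω : ℝ) (hω : ω ∈ Set.Icc (0:ℝ) 1)
    (N : ℕ) (hN : N ≤ n) :
    (⋃ u ∈ {u : Fin n → ℝ |
        ∀ i, u i ∈ Set.Icc (U i - ω * U i) (U i + ω * (1 - U i))},
      Set.Icc (ostat n u N) (ostat n u (N + 1))) =
    Set.Icc (ostat n U N - ω * ostat n U N)
      (ostat n U (N + 1) + ω * (1 - ostat n U (N + 1))) := by
  obtain ⟨hω0, hω1⟩ := hω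
  exact iUnion_Icc_ostat_eq (lo := fun v => v - ω * v) (hi := fun v => v + ω * (1 - v))
    (fun a b hab => by nlinarith) (fun a b hab => by nlinarith) (fun v => by nlinarith)
    (by ring) (by ring) hinj hN

/-- in the Bernoulli example with interval weakening
`S_ω(U) = ∏_i [U_i - ωU_i, U_i + ω(1-U_i)]`, the weakened posterior focal element
given success count `N` is the enlarged interval
`[U_(N) - ωU_(N), U_(N+1) + ω(1-U_(N+1))]`. -/
theorem bernoulli_weakened_focal_element
    (n : ℕ) (U : Fin n → ℝ) (hU : ∀ i, U i ∈ Set.Icc (0:ℝ) 1)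
    (hinj : Function.Injective U)
    (ω : ℝ) (hω : ω ∈ Set.Icc (0:ℝ) 1)
    (N : ℕ) (hN : N ≤ n) :
    (⋃ u ∈ {u : Fin n → ℝ |
        ∀ i, u i ∈ Set.Icc (U i - ω * U i) (U i + ω * (1 - U i))},
      Set.Icc (ostat n u N) (ostat n u (N + 1))) =
    Set.Icc (ostat n U N - ω * ostat n U N)
      (ostat n U (N + 1) + ω * (1 - ostat n U (N + 1))) :=
  bernoulli_weakened_focal_element_general n U hinj ω hω N hN
end
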